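/- The value at z = 0 of the ℓ = 1 specialized big q-Jacobi polynomial satisfies P_{1,n}(0) = ((−1)^{n+1} (q;q)_n)/((1−q)^n (−q^{n+1};q)_{n+1}) · (−1 + (−1)^{n+1} q^{(n+1)^2}). -/
import Mathlib

open Finset Polynomial

noncomputable def q : RatFunc ℚ := RatFunc.X

/-- q-integer `[k]_q = (1-q^k)/(1-q)` for `k : ℤ`. -/
noncomputable def qint (k : ℤ) : RatFunc ℚ := (1 - q ^ k) / (1 - q)

/-- q-factorial `[n]_q!`. -/
noncomputable def qfact (n : ℕ) : RatFunc ℚ := ∏ m ∈ Finset.range n, qint (m + 1)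

/-- q-Pochhammer `(A;Q)_n`. -/
noncomputable def qPoch (Q A : RatFunc ℚ) (n : ℕ) : RatFunc ℚ :=
  ∏ j ∈ Finset.range n, (1 - A * Q ^ j)

/-- The generalized q-binomial polynomial `[m, z choose n]_q`. -/
noncomputable def qbinomPoly (m n : ℕ) : Polynomial (RatFunc ℚ) :=
  Polynomial.C (qfact n)⁻¹ *
    ∏ k ∈ Finset.Icc ((m : ℤ) - n + 1) (m : ℤ),
      (Polynomial.C (qint k) + Polynomial.C (q ^ k) * Polynomial.X)

/-- The polynomial `(q(1-(1-q)z); q)_k` in the variable `z`. -/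
noncomputable def pochPoly (k : ℕ) : Polynomial (RatFunc ℚ) :=
  ∏ j ∈ Finset.range k,
    (1 - Polynomial.C q * (1 - Polynomial.C (1 - q) * Polynomial.X) * Polynomial.C q ^ j)

/-- The specialized (rescaled, shifted) big q-Jacobi polynomials `P_{ℓ,n}(z)`. -/
noncomputable def bigP (ℓ n : ℕ) : Polynomial (RatFunc ℚ) :=
  Polynomial.C ((-1) ^ n * qPoch q (q ^ (ℓ + 1)) n /
      (q ^ n * (1 - q) ^ n * qPoch q (-q ^ (n + ℓ + 1)) n)) *
    ∑ k ∈ Finset.range (n + 1),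
      Polynomial.C (qPoch q (q ^ (-(n : ℤ))) k * qPoch q (-q ^ (n + ℓ + 1)) k * q ^ k /
          (qPoch q q k * qPoch q (q ^ (ℓ + 1)) k)) * pochPoly k

/-! ### Auxiliary lemmas -/

lemma q_eq : q = algebraMap (Polynomial ℚ) (RatFunc ℚ) Polynomial.X :=
  (RatFunc.algebraMap_X).symm

lemma hq0 : q ≠ 0 := by
  rw [q_eq]
  exact RatFunc.algebraMap_ne_zero Polynomial.X_ne_zero

lemma one_sub_q_pow_ne (m : ℕ) : (1 - q ^ (m+1)) ≠ 0 := by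
  rw [q_eq]
  have : (1 : RatFunc ℚ) - (algebraMap (Polynomial ℚ) (RatFunc ℚ) Polynomial.X) ^ (m+1)
      = algebraMap (Polynomial ℚ) (RatFunc ℚ) (1 - Polynomial.X ^ (m+1)) := by
    simp
  rw [this]
  apply RatFunc.algebraMap_ne_zero
  intro h
  have := congrArg (fun p => Polynomial.coeff p 0) h
  simp [Polynomial.coeff_X_pow] at this

lemma one_add_q_pow_ne (m : ℕ) : (1 + q ^ (m+1)) ≠ 0 := by
  rw [q_eq]
  have : (1 : RatFunc ℚ) + (algebraMap (Polynomial ℚ) (RatFunc ℚ) Polynomial.X) ^ (m+1)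
      = algebraMap (Polynomial ℚ) (RatFunc ℚ) (1 + Polynomial.X ^ (m+1)) := by
    simp
  rw [this]
  apply RatFunc.algebraMap_ne_zero
  intro h
  have := congrArg (fun p => Polynomial.coeff p 0) h
  simp [Polynomial.coeff_X_pow] at this

lemma one_sub_q_ne : (1 - q) ≠ 0 := by
  have := one_sub_q_pow_ne 0
  simpa using this

lemma qPoch_succ (Q A : RatFunc ℚ) (k : ℕ) :
    qPoch Q A (k+1) = qPoch Q A k * (1 - A * Q^k) := Finset.prod_range_succ _ _

lemma qPoch_succ' (Q A : RatFunc ℚ) (k : ℕ) :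
    qPoch Q A (k+1) = (1 - A) * qPoch Q (A*Q) k := by
  rw [qPoch, Finset.prod_range_succ']
  simp only [pow_zero, mul_one]
  rw [mul_comm, qPoch]
  congr 1
  apply Finset.prod_congr rfl
  intro j _
  ring

lemma qPoch_zero (Q A : RatFunc ℚ) : qPoch Q A 0 = 1 := rfl

lemma qPoch_q_ne (k : ℕ) : qPoch q q k ≠ 0 := by
  rw [qPoch]
  apply Finset.prod_ne_zero_iff.mpr
  intro j _
  have : (1 : RatFunc ℚ) - q * q ^ j = 1 - q ^ (j+1) := by ring
  rw [this]; exact one_sub_q_pow_ne j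

lemma qPoch_q2_ne (k : ℕ) : qPoch q (q^2) k ≠ 0 := by
  rw [qPoch]
  apply Finset.prod_ne_zero_iff.mpr
  intro j _
  have : (1 : RatFunc ℚ) - q^2 * q ^ j = 1 - q ^ (j+2) := by ring
  rw [this]; exact one_sub_q_pow_ne (j+1)

lemma qPoch_neg_ne (m k : ℕ) : qPoch q (-q^(m+1)) k ≠ 0 := by
  rw [qPoch]
  apply Finset.prod_ne_zero_iff.mpr
  intro j _
  have : (1 : RatFunc ℚ) - (-q^(m+1)) * q ^ j = 1 + q ^ (m+j+1) := by ring
  rw [this]; exact one_add_q_pow_ne (m+j)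

/-- The coefficient `c_{n,k} = (q^{-n};q)_k q^k / (q^2;q)_k`. -/
noncomputable def cc (n k : ℕ) : RatFunc ℚ :=
  qPoch q ((q^n)⁻¹) k * q^k / qPoch q (q^2) k

lemma cc_zero (n : ℕ) : cc n 0 = 1 := by simp [cc, qPoch]

lemma cc_top (n : ℕ) : cc n (n+1) = 0 := by
  rw [cc, qPoch, Finset.prod_eq_zero (Finset.self_mem_range_succ n)]
  · simp
  · rw [inv_mul_cancel₀ (pow_ne_zero n hq0)]; ring

lemma hksub (k : ℕ) : ((1:RatFunc ℚ) - q^(k+2)) ≠ 0 := by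
  have := one_sub_q_pow_ne (k+1); simpa [show k+1+1 = k+2 by omega] using this

lemma cc_rec1m (n k : ℕ) :
    q^n * (1 - q^(k+2)) * cc n (k+1) = q * (q^n - q^k) * cc n k := by
  rw [cc, cc, qPoch_succ, qPoch_succ]
  have h2 : (1 : RatFunc ℚ) - q^2 * q^k = 1 - q^(k+2) := by ring
  rw [h2]
  have hd := qPoch_q2_ne k
  have h1 := hksub k
  have hn : (q:RatFunc ℚ)^n ≠ 0 := pow_ne_zero _ hq0
  field_simp
  ring

lemma cc_rec2m (n k : ℕ) :
    q^(n+1) * (1 - q^(k+2)) * cc (n+1) (k+1) = q * (q^(n+1) - 1) * cc n k := by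
  rw [cc, cc, qPoch_succ (A := q^2), qPoch_succ']
  have ha : ((q:RatFunc ℚ)^(n+1))⁻¹ * q = (q^n)⁻¹ := by
    rw [pow_succ, mul_inv, mul_assoc, inv_mul_cancel₀ hq0, mul_one]
  rw [ha]
  have h2 : (1 : RatFunc ℚ) - q^2 * q^k = 1 - q^(k+2) := by ring
  rw [h2]
  have hd := qPoch_q2_ne k
  have h1 := hksub k
  have hn1 : (q:RatFunc ℚ)^(n+1) ≠ 0 := pow_ne_zero _ hq0
  field_simp
  ring

lemma cc_key (n k : ℕ) :
    cc (n+1) (k+1) = (1-q^(n+1))/(1-q^(n+2)) *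
      ((q^(k+1))⁻¹ * cc n (k+1) - (q^k)⁻¹ * cc n k) := by
  have h1 := hksub k
  have h2 : ((1:RatFunc ℚ) - q^(n+2)) ≠ 0 := hksub n
  have hk : (q:RatFunc ℚ)^k ≠ 0 := pow_ne_zero _ hq0
  have hk1 : (q:RatFunc ℚ)^(k+1) ≠ 0 := pow_ne_zero _ hq0
  have hn1 : (q:RatFunc ℚ)^(n+1) ≠ 0 := pow_ne_zero _ hq0
  have r1 := cc_rec1m n k
  have r2 := cc_rec2m n k
  have key : (1-q^(n+2)) * (q^(k+1) * cc (n+1) (k+1))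
      = (1-q^(n+1)) * (cc n (k+1) - q * cc n k) := by
    apply mul_left_cancel₀ (mul_ne_zero hn1 (hksub k))
    linear_combination ((1:RatFunc ℚ)-q^(n+2)) * q^(k+1) * r2 - (1-q^(n+1)) * q * r1
  field_simp
  linear_combination q^k * key

noncomputable def Ssum (n : ℕ) (x : RatFunc ℚ) : RatFunc ℚ :=
  ∑ k ∈ range (n+1), cc n k * qPoch q x k

lemma lemmaA (n : ℕ) : ∀ x : RatFunc ℚ,
    Ssum n x = (1-q)/(1-q^(n+1)) * ∑ i ∈ range (n+1), q^(n-i) * x^i := by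
  induction n with
  | zero =>
    intro x
    simp [Ssum, cc_zero, qPoch, div_self one_sub_q_ne]
  | succ n ih =>
    intro x
    set A : RatFunc ℚ := (1-q^(n+1))/(1-q^(n+2)) with hA
    have hTsplit : Ssum (n+1) x
        = 1 + ∑ k ∈ range (n+1), cc (n+1) (k+1) * qPoch q x (k+1) := by
      rw [Ssum, Finset.sum_range_succ']
      rw [cc_zero, qPoch_zero, mul_one, add_comm]
    have hkey : ∀ k ∈ range (n+1), cc (n+1) (k+1) * qPoch q x (k+1)
        = A * ((q^(k+1))⁻¹ * cc n (k+1) * qPoch q x (k+1))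
          - A * ((q^k)⁻¹ * cc n k * qPoch q x (k+1)) := by
      intro k _
      rw [cc_key]
      ring
    rw [hTsplit, Finset.sum_congr rfl hkey, Finset.sum_sub_distrib,
      ← Finset.mul_sum, ← Finset.mul_sum]
    set T : RatFunc ℚ := ∑ k ∈ range (n+1), (q^k)⁻¹ * cc n k * qPoch q x k with hT
    have hU1 : ∑ k ∈ range (n+1), (q^(k+1))⁻¹ * cc n (k+1) * qPoch q x (k+1) = T - 1 := by
      have h := Finset.sum_range_succ' (fun k => (q^k)⁻¹ * cc n k * qPoch q x k) (n+1)
      have htop : (q^(n+1))⁻¹ * cc n (n+1) * qPoch q x (n+1) = 0 := by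
        rw [cc_top]; ring
      rw [Finset.sum_range_succ, htop, add_zero] at h
      rw [← hT] at h
      simp only [pow_zero, inv_one, one_mul, cc_zero, qPoch_zero, mul_one] at h
      exact eq_sub_of_add_eq h.symm
    have hU2 : ∑ k ∈ range (n+1), (q^k)⁻¹ * cc n k * qPoch q x (k+1)
        = T - x * Ssum n x := by
      have : ∀ k ∈ range (n+1), (q^k)⁻¹ * cc n k * qPoch q x (k+1)
          = (q^k)⁻¹ * cc n k * qPoch q x k - x * (cc n k * qPoch q x k) := by
        intro k _
        rw [qPoch_succ]
        have h : ((q:RatFunc ℚ)^k)⁻¹ * q^k = 1 := inv_mul_cancel₀ (pow_ne_zero _ hq0)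
        linear_combination (-(cc n k * qPoch q x k * x)) * h
      rw [Finset.sum_congr rfl this, Finset.sum_sub_distrib, ← Finset.mul_sum, ← Ssum]
    rw [hU1, hU2, ih x]
    have hgoalRHS : ∑ i ∈ range (n+1+1), q^(n+1-i) * x^i
        = q^(n+1) + x * ∑ i ∈ range (n+1), q^(n-i) * x^i := by
      rw [Finset.sum_range_succ']
      simp only [Nat.succ_sub_succ]
      rw [Finset.mul_sum]
      simp only [pow_zero, mul_one, Nat.sub_zero]
      rw [add_comm]
      congr 1
      apply Finset.sum_congr rfl
      intro i _
      ring
    rw [hgoalRHS]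
    have h1 : ((1:RatFunc ℚ) - q^(n+1)) ≠ 0 := one_sub_q_pow_ne n
    have h2 : ((1:RatFunc ℚ) - q^(n+2)) ≠ 0 := hksub n
    rw [hA]
    field_simp
    ring

lemma pochPoly_eval_zero (k : ℕ) : (pochPoly k).eval 0 = qPoch q q k := by
  rw [pochPoly, Polynomial.eval_prod, qPoch]
  apply Finset.prod_congr rfl
  intro j _
  simp

theorem bigP_one_eval_zero (n : ℕ) :
    (bigP 1 n).eval 0 =
      (-1) ^ (n + 1) * qPoch q q n / ((1 - q) ^ n * qPoch q (-q ^ (n + 1)) (n + 1)) *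
        (-1 + (-1) ^ (n + 1) * q ^ ((n + 1) ^ 2)) := by
  have hzp : (q ^ (-(n:ℤ))) = ((q^n)⁻¹ : RatFunc ℚ) := by
    rw [zpow_neg, zpow_natCast]
  rw [bigP, Polynomial.eval_mul, Polynomial.eval_C, Polynomial.eval_finset_sum]
  simp only [Polynomial.eval_mul, Polynomial.eval_C]
  have hsum : ∑ k ∈ range (n+1),
      qPoch q (q ^ (-(n : ℤ))) k * qPoch q (-q ^ (n + 1 + 1)) k * q ^ k /
        (qPoch q q k * qPoch q (q ^ (1 + 1)) k) * (pochPoly k).eval 0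
      = Ssum n (-q^(n+2)) := by
    rw [Ssum]
    apply Finset.sum_congr rfl
    intro k _
    rw [pochPoly_eval_zero k, hzp, cc]
    have h1 : qPoch q q k ≠ 0 := qPoch_q_ne k
    have h2 : qPoch q (q^(1+1)) k ≠ 0 := qPoch_q2_ne k
    have h3 : (n + 1 + 1) = n + 2 := by omega
    rw [h3]
    field_simp
  rw [hsum, lemmaA n _]
  have hgeo : ∑ i ∈ range (n+1), q^(n-i) * (-q^(n+2))^i
      = q^n * (((-q^(n+1))^(n+1) - 1)/((-q^(n+1)) - 1)) := by
    have hstep : ∀ i ∈ range (n+1), q^(n-i) * (-q^(n+2))^i = q^n * (-q^(n+1))^i := by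
      intro i hi
      have hin : i ≤ n := Nat.lt_succ_iff.mp (Finset.mem_range.mp hi)
      have he : n - i + (n+2)*i = n + (n+1)*i := by
        have hmul : (n+2)*i = i + (n+1)*i := by ring
        omega
      rw [show ((-q^(n+2)):RatFunc ℚ)^i = (-1)^i * q^((n+2)*i) by
            rw [neg_pow (q^(n+2)) i, ← pow_mul],
          show ((-q^(n+1)):RatFunc ℚ)^i = (-1)^i * q^((n+1)*i) by
            rw [neg_pow (q^(n+1)) i, ← pow_mul]]
      calc q^(n-i) * ((-1:RatFunc ℚ)^i * q^((n+2)*i))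
          = (-1:RatFunc ℚ)^i * q^(n-i+(n+2)*i) := by rw [pow_add]; ring
        _ = (-1:RatFunc ℚ)^i * q^(n+(n+1)*i) := by rw [he]
        _ = q^n * ((-1:RatFunc ℚ)^i * q^((n+1)*i)) := by rw [pow_add]; ring
    rw [Finset.sum_congr rfl hstep, ← Finset.mul_sum]
    congr 1
    apply geom_sum_eq
    intro h
    apply one_add_q_pow_ne n
    rw [← neg_neg ((q:RatFunc ℚ)^(n+1)), h]
    ring
  rw [hgeo]
  have hE : ((-q^(n+1)):RatFunc ℚ)^(n+1) = (-1)^(n+1) * q^((n+1)^2) := by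
    rw [neg_pow (q^(n+1)) (n+1), ← pow_mul]
    congr 1
    rw [pow_two]
  rw [hE]
  have hGm : qPoch q (-q^(n+1)) (n+1) = (1 + q^(n+1)) * qPoch q (-q^(n+2)) n := by
    rw [qPoch_succ']
    congr 1
    · ring
    · congr 1
      rw [pow_succ]
      ring
  rw [hGm]
  have hG2 : (1 - q) * qPoch q (q^(1+1)) n = qPoch q q n * (1 - q^(n+1)) := by
    have ha := qPoch_succ' q q n
    have hb := qPoch_succ q q n
    have hx : (q:RatFunc ℚ) * q = q^(1+1) := by ring
    have hy : (1:RatFunc ℚ) - q * q^n = 1 - q^(n+1) := by rw [pow_succ]; ring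
    rw [hx] at ha
    rw [hy] at hb
    rw [← ha, hb]
  have hG2' : qPoch q (q^(1+1)) n = qPoch q q n * (1 - q^(n+1)) / (1 - q) := by
    rw [← hG2, mul_comm, mul_div_assoc, div_self one_sub_q_ne, mul_one]
  rw [hG2']
  have h1 : ((1:RatFunc ℚ) - q^(n+1)) ≠ 0 := one_sub_q_pow_ne n
  have h2 : ((1:RatFunc ℚ) + q^(n+1)) ≠ 0 := one_add_q_pow_ne n
  have h3 : ((-q^(n+1)):RatFunc ℚ) - 1 ≠ 0 := by
    intro h
    apply one_add_q_pow_ne n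
    rw [← neg_neg ((1:RatFunc ℚ) + q^(n+1))]
    rw [show -((1:RatFunc ℚ) + q^(n+1)) = -q^(n+1) - 1 by ring, h, neg_zero]
  have h4 : qPoch q (-q^(n+2)) n ≠ 0 := by
    have := qPoch_neg_ne (n+1) n
    simpa [show n+1+1 = n+2 by omega] using this
  have h9 : ((-q^(n+1)) - 1 : RatFunc ℚ) = -(1+q^(n+1)) := by ring
  rw [h9]
  have h5 : (q:RatFunc ℚ)^n ≠ 0 := pow_ne_zero _ hq0
  have h6 : ((1:RatFunc ℚ) - q)^n ≠ 0 := pow_ne_zero _ one_sub_q_ne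
  have h7 : qPoch q q n ≠ 0 := qPoch_q_ne n
  simp only [div_mul_eq_mul_div, mul_div_assoc', div_div]
  rw [show n+1+1 = n+2 by omega]
  rw [div_eq_div_iff
    (mul_ne_zero (mul_ne_zero one_sub_q_ne (mul_ne_zero (mul_ne_zero h5 h6) h4))
      (mul_ne_zero h1 (neg_ne_zero.mpr h2)))
    (mul_ne_zero h6 (mul_ne_zero h2 h4))]
  ring
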